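/- arXiv:0710.0067 — 3 statements merged into one kernel-verified Lean document; each statement's English description precedes it below -/
import Mathlib

section
/- Let β : [0,∞) → ℝ be convex, let r ≥ 0 be an extremal point of β (i.e., β(r) < s·β(r₁) + (1-s)·β(r₂) whenever r₁ ≠ r₂, 0 < s < 1 and s·r₁ + (1-s)·r₂ = r). Let (E, λ) be a probability space and g : E → [0,∞) integrable with ∫ g dλ = r and β(∫ g dλ) = ∫ β∘g dλ. Then g = r λ-almost everywhere. -/
/-!
It suffices that `g - r` has a.e. constant sign, since it has mean zero; for `r = 0` this is `g ≥ 0`.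
For `r > 0` take the supporting line `ℓ(y) = β r + c (y - r)` of `β` at `r`, with `c` the right
derivative. Since `ℓ ≤ β` and `∫ ℓ ∘ g = β r = ∫ β ∘ g`, the function `g` takes its values a.e. in
the contact set `{β = ℓ}`, and extremality of `r` forbids contact points on both sides of `r`.
-/

open MeasureTheory Set

def IsExtremalPointOn (S : Set ℝ) (f : ℝ → ℝ) (x : ℝ) : Prop :=
  ∀ r₁ r₂ s : ℝ, r₁ ∈ S → r₂ ∈ S → r₁ ≠ r₂ → 0 < s → s < 1 →
    s * r₁ + (1 - s) * r₂ = x → f x < s * f r₁ + (1 - s) * f r₂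

theorem IsExtremalPointOn.contact_subset_Ici_or_Iic {S : Set ℝ} {f : ℝ → ℝ} {x : ℝ}
    (hx : IsExtremalPointOn S f x) (c : ℝ) :
    (∀ y ∈ S, f y = f x + c * (y - x) → x ≤ y) ∨ (∀ y ∈ S, f y = f x + c * (y - x) → y ≤ x) := by
  by_contra! h
  obtain ⟨⟨a, haS, hfa, hax⟩, ⟨b, hbS, hfb, hxb⟩⟩ := h
  have hba : 0 < b - a := by linarith
  set s := (x - a) / (b - a) with hs
  have hsum : s * b + (1 - s) * a = x := by
    rw [hs]
    field_simp
    ring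
  have hchord := hx b a s hbS haS (by linarith) (div_pos (by linarith) hba)
    ((div_lt_one hba).2 (by linarith)) hsum
  have hline : s * (f x + c * (b - x)) + (1 - s) * (f x + c * (a - x))
      = f x + c * (s * b + (1 - s) * a - x) := by ring
  rw [hfa, hfb, hline, hsum] at hchord
  simp at hchord

theorem ConvexOn.add_rightDeriv_mul_sub_le {S : Set ℝ} {f : ℝ → ℝ} {x y : ℝ}
    (hf : ConvexOn ℝ S f) (hx : x ∈ interior S) (hy : y ∈ S) :
    f x + derivWithin f (Ioi x) x * (y - x) ≤ f y := by
  rcases lt_trichotomy y x with hyx | rfl | hxy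
  · have hslope := (hf.slope_le_leftDeriv_of_mem_interior hy hx hyx).trans
      (hf.leftDeriv_le_rightDeriv_of_mem_interior hx)
    rw [slope_def_field, div_le_iff₀ (sub_pos.2 hyx)] at hslope
    linarith
  · simp
  · have hslope := hf.rightDeriv_le_slope_of_mem_interior hx hy hxy
    rw [slope_def_field, le_div_iff₀ (sub_pos.2 hxy)] at hslope
    linarith

section Probability

variable {α : Type*} [MeasurableSpace α] {μ : Measure α} [IsProbabilityMeasure μ] {g : α → ℝ}

theorem ae_eq_const_of_integral_eq_of_ae_le_or_ae_ge {r : ℝ} (hg : Integrable g μ)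
    (hmean : ∫ a, g a ∂μ = r) (hsign : (∀ᵐ a ∂μ, r ≤ g a) ∨ ∀ᵐ a ∂μ, g a ≤ r) :
    ∀ᵐ a ∂μ, g a = r := by
  rcases hsign with hle | hge
  · have := (integral_eq_iff_of_ae_le (integrable_const r) hg hle).1 (by simp [hmean])
    filter_upwards [this] with a ha using ha.symm
  · exact (integral_eq_iff_of_ae_le hg (integrable_const r) hge).1 (by simp [hmean])

theorem ae_map_eq_supportingLine_of_map_integral_eq {f : ℝ → ℝ} {c : ℝ}
    (hsupp : ∀ᵐ a ∂μ, f (∫ b, g b ∂μ) + c * (g a - ∫ b, g b ∂μ) ≤ f (g a))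
    (hg : Integrable g μ) (hfg : Integrable (fun a => f (g a)) μ)
    (heq : f (∫ a, g a ∂μ) = ∫ a, f (g a) ∂μ) :
    ∀ᵐ a ∂μ, f (g a) = f (∫ b, g b ∂μ) + c * (g a - ∫ b, g b ∂μ) := by
  set m := ∫ b, g b ∂μ
  have hdev : Integrable (fun a => c * (g a - m)) μ := (hg.sub (integrable_const m)).const_mul c
  have hline : ∫ a, f m + c * (g a - m) ∂μ = f m := by
    rw [integral_add (integrable_const _) hdev, integral_const_mul,
      integral_sub hg (integrable_const m)]
    simp [m]
  filter_upwards [(integral_eq_iff_of_ae_le ((integrable_const _).add hdev) hfg hsupp).1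
    (hline.trans heq)] with a ha using ha.symm

end Probability

/-- Equality case in Jensen's inequality at an extremal point of a convex function:
if `β` is convex on `[0,∞)`, `r ≥ 0` is an extremal point of `β`, `g ≥ 0` is integrable on a
probability space with `∫ g dλ = r` and `β(∫ g dλ) = ∫ β ∘ g dλ`, then `g = r` a.e. -/
theorem jensen_equality_extremal {E : Type*} [MeasurableSpace E] (lam : Measure E)
    [IsProbabilityMeasure lam] (β : ℝ → ℝ) (hβ : ConvexOn ℝ (Set.Ici 0) β)
    (r : ℝ) (hr : 0 ≤ r)
    (hext : ∀ r₁ r₂ s : ℝ, 0 ≤ r₁ → 0 ≤ r₂ → r₁ ≠ r₂ → 0 < s → s < 1 →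
      s * r₁ + (1 - s) * r₂ = r → β r < s * β r₁ + (1 - s) * β r₂)
    (g : E → ℝ) (hg : ∀ x, 0 ≤ g x) (hgint : Integrable g lam)
    (hβgint : Integrable (fun x => β (g x)) lam)
    (hmean : ∫ x, g x ∂lam = r)
    (hjensen : β (∫ x, g x ∂lam) = ∫ x, β (g x) ∂lam) :
    ∀ᵐ x ∂lam, g x = r := by
  refine ae_eq_const_of_integral_eq_of_ae_le_or_ae_ge hgint hmean ?_
  rcases hr.eq_or_lt with rfl | hr_pos
  · exact Or.inl (ae_of_all _ hg)
  set c := derivWithin β (Ioi r) r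
  have hsupp (y : ℝ) (hy : 0 ≤ y) : β r + c * (y - r) ≤ β y :=
    hβ.add_rightDeriv_mul_sub_le (by simpa using hr_pos) hy
  have hcontact : ∀ᵐ x ∂lam, β (g x) = β r + c * (g x - r) := by
    rw [← hmean] at hsupp ⊢
    exact ae_map_eq_supportingLine_of_map_integral_eq
      (ae_of_all _ fun x => hsupp _ (hg x)) hgint hβgint hjensen
  have hext' : IsExtremalPointOn (Ici 0) β r := hext
  refine (hext'.contact_subset_Ici_or_Iic c).imp (fun h => ?_) (fun h => ?_) <;>
    filter_upwards [hcontact] with x hx using h _ (hg x) hx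
end

section
/- Let β : [0,∞) → ℝ be convex and satisfy a₁r² - A₁ ≤ β(r) for all r ≥ 0, with a₁ > 0. Then β has infinitely many extremal points; more precisely, the set of extremal points of β is unbounded. -/
/-- `r` is an extremal point of the convex function `β` on `[0,∞)`: every nontrivial convex
combination representing `r` gives a strict inequality. -/
def IsExtremalPoint (β : ℝ → ℝ) (r : ℝ) : Prop :=
  0 ≤ r ∧ ∀ r₁ r₂ s : ℝ, 0 ≤ r₁ → 0 ≤ r₂ → r₁ ≠ r₂ → 0 < s → s < 1 →
    s * r₁ + (1 - s) * r₂ = r → β r < s * β r₁ + (1 - s) * β r₂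

set_option maxHeartbeats 1000000 in
/-- A convex function on `[0,∞)` with a quadratic lower bound has an unbounded set of
extremal points. -/
theorem extremal_points_unbounded (β : ℝ → ℝ) (hβ : ConvexOn ℝ (Set.Ici 0) β)
    (a₁ A₁ : ℝ) (ha₁ : 0 < a₁) (hlow : ∀ r : ℝ, 0 ≤ r → a₁ * r ^ 2 - A₁ ≤ β r) :
    ∀ R : ℝ, ∃ r : ℝ, R ≤ r ∧ IsExtremalPoint β r := by
  intro R
  set R₀ : ℝ := max R 1 with hR₀def
  have hR₀1 : (1 : ℝ) ≤ R₀ := le_max_right _ _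
  have hRR₀ : R ≤ R₀ := le_max_left _ _
  have hR₀0 : (0 : ℝ) < R₀ := lt_of_lt_of_le one_pos hR₀1
  set c : ℝ := |β (R₀ + 1) + A₁| + 1 with hcdef
  have hc0 : (0 : ℝ) < c := by positivity
  have hcgt : β (R₀ + 1) + A₁ < c := lt_of_le_of_lt (le_abs_self _) (lt_add_one _)
  set f : ℝ → ℝ := fun x => β x - c * x with hfdef
  set K : ℝ := f (R₀ + 1) with hKdef
  have hKval : K = β (R₀ + 1) - c * (R₀ + 1) := rfl
  -- on [0, R₀], f is strictly above K
  have hleft : ∀ x, 0 ≤ x → x ≤ R₀ → K < f x := by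
    intro x hx0 hxR
    have h1 : a₁ * x ^ 2 - A₁ ≤ β x := hlow x hx0
    have h2 : 0 ≤ a₁ * x ^ 2 := by positivity
    have h3 : c * 1 ≤ c * (R₀ + 1 - x) := by
      apply mul_le_mul_of_nonneg_left _ hc0.le
      linarith
    have : f x = β x - c * x := rfl
    rw [this, hKval]
    nlinarith
  set M : ℝ := max (R₀ + 1) ((c + |K| + |A₁| + 1) / a₁) with hMdef
  have hM1 : R₀ + 1 ≤ M := le_max_left _ _
  -- beyond M, f is strictly above K
  have hright : ∀ x, M ≤ x → K < f x := by
    intro x hx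
    have hx1 : (1 : ℝ) ≤ x := by linarith
    have hx0 : (0 : ℝ) ≤ x := by linarith
    have hMa : (c + |K| + |A₁| + 1) / a₁ ≤ x := le_trans (le_max_right _ _) hx
    have h4 : c + |K| + |A₁| + 1 ≤ a₁ * x := by
      rw [div_le_iff₀ ha₁] at hMa; linarith
    have h5 : (c + |K| + |A₁| + 1) * x ≤ a₁ * x * x :=
      mul_le_mul_of_nonneg_right h4 hx0
    have h6 : a₁ * x ^ 2 - A₁ ≤ β x := hlow x hx0
    have hKle : K ≤ |K| := le_abs_self _
    have hA : -A₁ ≤ |A₁| := neg_le_abs _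
    have : f x = β x - c * x := rfl
    rw [this]
    nlinarith [abs_nonneg K, abs_nonneg A₁]
  -- continuity of f on [R₀, M]
  have hIcc_sub : Set.Icc R₀ M ⊆ Set.Ioi (0 : ℝ) := fun x hx => lt_of_lt_of_le hR₀0 hx.1
  have hβcont : ContinuousOn β (Set.Ioi (0 : ℝ)) := by
    have h := (hβ.subset (Set.Ioi_subset_Ici le_rfl) (convex_Ioi 0)).continuousOn isOpen_Ioi
    exact h
  have hcont : ContinuousOn f (Set.Icc R₀ M) :=
    ((hβcont.mono hIcc_sub).sub ((continuous_const.mul continuous_id).continuousOn))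
  -- minimum of f on [R₀, M]
  have hne : (Set.Icc R₀ M).Nonempty := ⟨R₀, le_refl _, by linarith⟩
  obtain ⟨z, hz, hzmin⟩ := isCompact_Icc.exists_isMinOn hne hcont
  set m : ℝ := f z with hmdef
  have hzmin' : ∀ x ∈ Set.Icc R₀ M, m ≤ f x := fun x hx => hzmin hx
  have hmK : m ≤ K := hzmin' (R₀ + 1) ⟨by linarith, hM1⟩
  -- least minimizer
  set T : Set ℝ := Set.Icc R₀ M ∩ f ⁻¹' Set.Iic m with hTdef
  have hTclosed : IsClosed T :=
    hcont.preimage_isClosed_of_isClosed isClosed_Icc isClosed_Iic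
  have hTne : T.Nonempty := ⟨z, hz, le_refl m⟩
  have hTbdd : BddBelow T := ⟨R₀, fun x hx => hx.1.1⟩
  set p : ℝ := sInf T with hpdef
  have hpT : p ∈ T := hTclosed.csInf_mem hTne hTbdd
  have hpIcc : p ∈ Set.Icc R₀ M := hpT.1
  have hfp : f p = m := le_antisymm hpT.2 (hzmin' p hpIcc)
  have hp0 : (0 : ℝ) ≤ p := le_trans hR₀0.le hpIcc.1
  -- global minimality
  have hglob : ∀ x, 0 ≤ x → f p ≤ f x := by
    intro x hx0
    rcases le_or_gt x R₀ with h | h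
    · have := hleft x hx0 h
      linarith [hfp, hmK]
    · rcases le_or_gt x M with h' | h'
      · rw [hfp]; exact hzmin' x ⟨h.le, h'⟩
      · have := hright x h'.le
        linarith [hfp, hmK]
  -- p > R₀
  have hpR₀ : R₀ < p := by
    rcases lt_or_eq_of_le hpIcc.1 with h | h
    · exact h
    · exfalso
      have h1 : K < f R₀ := hleft R₀ hR₀0.le le_rfl
      have h2 : f p = f R₀ := by rw [← h]
      linarith [hfp, hmK]
  refine ⟨p, by linarith, hp0, ?_⟩
  intro r₁ r₂ s h₁ h₂ hne12 hs0 hs1 hsum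
  by_contra hcon
  push_neg at hcon
  have hconv : β (s * r₁ + (1 - s) * r₂) ≤ s * β r₁ + (1 - s) * β r₂ := by
    have := hβ.2 h₁ h₂ hs0.le (by linarith : (0:ℝ) ≤ 1 - s) (by ring)
    simpa using this
  rw [hsum] at hconv
  have heq : β p = s * β r₁ + (1 - s) * β r₂ := le_antisymm hconv hcon
  have hfr : f p = s * f r₁ + (1 - s) * f r₂ := by
    show β p - c * p = s * (β r₁ - c * r₁) + (1 - s) * (β r₂ - c * r₂)
    rw [heq, ← hsum]; ring
  have hge1 : f p ≤ f r₁ := hglob r₁ h₁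
  have hge2 : f p ≤ f r₂ := hglob r₂ h₂
  have t1 : 0 ≤ s * (f r₁ - f p) := mul_nonneg hs0.le (by linarith)
  have t2 : 0 ≤ (1 - s) * (f r₂ - f p) := mul_nonneg (by linarith) (by linarith)
  have tsum : s * (f r₁ - f p) + (1 - s) * (f r₂ - f p) = 0 := by linear_combination -hfr
  have hfr1 : f r₁ = f p := by
    have h0 : s * (f r₁ - f p) = 0 := by linarith
    rcases mul_eq_zero.mp h0 with h | h
    · exact absurd h hs0.ne'
    · linarith
  have hfr2 : f r₂ = f p := by
    have h0 : (1 - s) * (f r₂ - f p) = 0 := by linarith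
    rcases mul_eq_zero.mp h0 with h | h
    · exfalso; linarith
    · linarith
  -- the smaller of r₁, r₂ is < p but also a minimizer: contradiction
  set q : ℝ := min r₁ r₂ with hqdef
  have hq0 : (0 : ℝ) ≤ q := le_min h₁ h₂
  have hfq : f q = f p := by
    rcases min_choice r₁ r₂ with h | h <;> rw [hqdef, h] <;> assumption
  have hqp : q < p := by
    rcases lt_or_gt_of_ne hne12 with h | h
    · have : q = r₁ := min_eq_left h.le
      rw [this, ← hsum]
      nlinarith [mul_pos (by linarith : (0:ℝ) < 1 - s) (by linarith : (0:ℝ) < r₂ - r₁)]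
    · have : q = r₂ := min_eq_right h.le
      rw [this, ← hsum]
      nlinarith [mul_pos hs0 (by linarith : (0:ℝ) < r₁ - r₂)]
  rcases le_or_gt q R₀ with h | h
  · rcases lt_or_eq_of_le h with h' | h'
    · have := hleft q hq0 h'.le
      linarith [hfp, hmK, hfq]
    · -- q = R₀ also lies in [0, R₀]
      have := hleft q hq0 h'.le
      linarith [hfp, hmK, hfq]
  · rcases le_or_gt q M with h' | h'
    · have hqT : q ∈ T := ⟨⟨h.le, h'⟩, by rw [Set.mem_preimage, Set.mem_Iic, hfq, hfp]⟩
      have : p ≤ q := csInf_le hTbdd hqT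
      linarith
    · have := hright q h'.le
      linarith [hfp, hmK, hfq]
end

section
/- Let γ : [0,1] → M be an absolutely continuous curve with speed g(t) = |γ'(t)|, let σ be the reparametrization σ(t) = (∫₀ᵗ √(1+g²))/(∫₀¹ √(1+g²)), τ = σ⁻¹, and γ₁ = γ∘τ. Then ‖γ₁'‖_∞ ≤ 1 + L(γ), where L(γ) = ∫₀¹ g(t) dt is the length of γ. -/
/-!
Differentiating `γ = γ₁ ∘ σ` at `x = τ t` gives `σ'(x) • γ₁'(t) = γ'(x)` with
`σ'(x) = √(1 + g(x)²) / ∫₀¹ √(1 + g²)`, so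
`‖γ₁'(t)‖ = (g(x) / √(1 + g(x)²)) · ∫₀¹ √(1 + g²) ≤ ∫₀¹ √(1 + g²) ≤ ∫₀¹ (1 + g) = 1 + L(γ)`.
-/

open intervalIntegral Set

lemma le_sqrt_one_add_sq (a : ℝ) : a ≤ √(1 + a ^ 2) :=
  (le_abs_self a).trans (Real.abs_le_sqrt (by linarith))

lemma sqrt_one_add_sq_le {a : ℝ} (ha : 0 ≤ a) : √(1 + a ^ 2) ≤ 1 + a :=
  (Real.sqrt_le_left (by linarith)).2 (by nlinarith)

lemma integral_sqrt_one_add_sq_le {g : ℝ → ℝ} {a b : ℝ} (hg : Continuous g) (hab : a ≤ b)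
    (hg₀ : ∀ s ∈ Icc a b, 0 ≤ g s) :
    ∫ s in a..b, √(1 + g s ^ 2) ≤ (b - a) + ∫ s in a..b, g s := by
  calc ∫ s in a..b, √(1 + g s ^ 2)
      ≤ ∫ s in a..b, (1 + g s) :=
        integral_mono_on hab ((by fun_prop : Continuous _).intervalIntegrable a b)
          ((by fun_prop : Continuous _).intervalIntegrable a b)
          fun s hs => sqrt_one_add_sq_le (hg₀ s hs)
    _ = (b - a) + ∫ s in a..b, g s := by
        rw [integral_add intervalIntegrable_const (hg.intervalIntegrable a b)]
        simp

/-- The paper's `σ` is `normalizedPrimitive (fun s => √(1 + g s ^ 2))`. -/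
noncomputable def normalizedPrimitive (f : ℝ → ℝ) (x : ℝ) : ℝ :=
  (∫ s in (0 : ℝ)..x, f s) / ∫ s in (0 : ℝ)..1, f s

section normalizedPrimitive

variable {f : ℝ → ℝ}

lemma hasDerivAt_normalizedPrimitive (hf : Continuous f) (x : ℝ) :
    HasDerivAt (normalizedPrimitive f) (f x / ∫ s in (0 : ℝ)..1, f s) x :=
  (integral_hasDerivAt_right (hf.intervalIntegrable 0 x)
    hf.stronglyMeasurable.stronglyMeasurableAtFilter hf.continuousAt).div_const _

lemma integral_zero_one_pos_of_pos (hf : Continuous f) (hpos : ∀ x, 0 < f x) :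
    0 < ∫ s in (0 : ℝ)..1, f s :=
  intervalIntegral_pos_of_pos_on (hf.intervalIntegrable 0 1) (fun x _ => hpos x) one_pos

lemma strictMono_normalizedPrimitive (hf : Continuous f) (hpos : ∀ x, 0 < f x) :
    StrictMono (normalizedPrimitive f) :=
  strictMono_of_deriv_pos fun x => by
    rw [(hasDerivAt_normalizedPrimitive hf x).deriv]
    exact div_pos (hpos x) (integral_zero_one_pos_of_pos hf hpos)

lemma mapsTo_normalizedPrimitive (hf : Continuous f) (hpos : ∀ x, 0 < f x) :
    MapsTo (normalizedPrimitive f) (Icc 0 1) (Icc 0 1) := by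
  have hS₀ : normalizedPrimitive f 0 = 0 := by simp [normalizedPrimitive]
  have hS₁ : normalizedPrimitive f 1 = 1 :=
    div_self (integral_zero_one_pos_of_pos hf hpos).ne'
  intro x hx
  rw [← hS₀, ← hS₁]
  exact (strictMono_normalizedPrimitive hf hpos).monotone.mapsTo_Icc hx

lemma leftInvOn_normalizedPrimitive (hf : Continuous f) (hpos : ∀ x, 0 < f x) {τ : ℝ → ℝ}
    (hτ : MapsTo τ (Icc 0 1) (Icc 0 1)) (hSτ : LeftInvOn (normalizedPrimitive f) τ (Icc 0 1)) :
    LeftInvOn τ (normalizedPrimitive f) (Icc 0 1) :=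
  (strictMono_normalizedPrimitive hf hpos).injective.injOn.rightInvOn_of_leftInvOn hSτ
    (mapsTo_normalizedPrimitive hf hpos) hτ

end normalizedPrimitive

lemma HasDerivAt.smul_eq_of_leftInvOn {E : Type*} [NormedAddCommGroup E] [NormedSpace ℝ E]
    {γ : ℝ → E} {S τ : ℝ → ℝ} {s : Set ℝ} {x c : ℝ} {v w : E}
    (hS : HasDerivAt S c x) (hinv : LeftInvOn τ S s) (hx : x ∈ s)
    (hs : UniqueDiffWithinAt ℝ s x) (hγτ : HasDerivAt (γ ∘ τ) v (S x))
    (hγ : HasDerivWithinAt γ w s x) :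
    c • v = w := by
  have hγ_eq : EqOn γ ((γ ∘ τ) ∘ S) s := fun y hy => by simp [hinv hy]
  have hγ' : HasDerivWithinAt γ (c • v) s x :=
    (hγτ.scomp x hS).hasDerivWithinAt.congr hγ_eq (hγ_eq hx)
  exact hs.eq_deriv _ hγ' hγ

lemma norm_le_of_div_smul_eq {E : Type*} [NormedAddCommGroup E] [NormedSpace ℝ E]
    {a D : ℝ} {v w : E} (ha : 0 < a) (hD : 0 < D) (hw : ‖w‖ ≤ a) (h : (a / D) • v = w) :
    ‖v‖ ≤ D := by
  rw [← h, norm_smul, Real.norm_of_nonneg (by positivity), div_mul_eq_mul_div,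
    div_le_iff₀ hD] at hw
  nlinarith [norm_nonneg v]

theorem reparametrized_speed_bound_general {m : ℕ}
    (γ γ' : ℝ → EuclideanSpace ℝ (Fin m)) (g τ : ℝ → ℝ)
    (hg : Continuous g)
    (hγ : ∀ t ∈ Set.Icc (0:ℝ) 1, HasDerivAt γ (γ' t) t)
    (hspeed : ∀ t ∈ Set.Icc (0:ℝ) 1, ‖γ' t‖ = g t)
    (hτ : ∀ t ∈ Set.Icc (0:ℝ) 1, τ t ∈ Set.Icc (0:ℝ) 1 ∧
      ((∫ s in (0:ℝ)..(τ t), Real.sqrt (1 + g s ^ 2)) /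
        (∫ s in (0:ℝ)..1, Real.sqrt (1 + g s ^ 2))) = t) :
    ∀ t ∈ Set.Icc (0:ℝ) 1, ∀ v : EuclideanSpace ℝ (Fin m),
      HasDerivAt (γ ∘ τ) v t → ‖v‖ ≤ 1 + ∫ s in (0:ℝ)..1, g s := by
  intro t ht v hv
  set f : ℝ → ℝ := fun s => √(1 + g s ^ 2)
  have hf : Continuous f := by fun_prop
  have hfpos : ∀ s, 0 < f s := fun s => by positivity
  have hg₀ : ∀ s ∈ Icc (0 : ℝ) 1, 0 ≤ g s := fun s hs => hspeed s hs ▸ norm_nonneg _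
  have hinv : LeftInvOn τ (normalizedPrimitive f) (Icc 0 1) :=
    leftInvOn_normalizedPrimitive hf hfpos (fun t ht => (hτ t ht).1) fun t ht => (hτ t ht).2
  obtain ⟨hx, hSx⟩ := hτ t ht
  have hv' : HasDerivAt (γ ∘ τ) v (normalizedPrimitive f (τ t)) := by
    rwa [show normalizedPrimitive f (τ t) = t from hSx]
  have key : (f (τ t) / ∫ s in (0 : ℝ)..1, f s) • v = γ' (τ t) :=
    (hasDerivAt_normalizedPrimitive hf (τ t)).smul_eq_of_leftInvOn hinv hx
      (uniqueDiffOn_Icc one_pos _ hx) hv' (hγ _ hx).hasDerivWithinAt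
  calc ‖v‖ ≤ ∫ s in (0 : ℝ)..1, f s :=
        norm_le_of_div_smul_eq (hfpos _) (integral_zero_one_pos_of_pos hf hfpos)
          ((hspeed _ hx).trans_le (le_sqrt_one_add_sq _)) key
    _ ≤ 1 + ∫ s in (0 : ℝ)..1, g s := by
        simpa using integral_sqrt_one_add_sq_le hg zero_le_one hg₀

/-- Speed bound for the reparametrized loop: if `γ` has speed `g = |γ'|`, `σ` is the
reparametrization built from `g`, `τ` its inverse, and `γ₁ = γ ∘ τ`, then
`‖γ₁'‖_∞ ≤ 1 + L(γ)` where `L(γ) = ∫₀¹ g`. -/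
theorem reparametrized_speed_bound {m : ℕ}
    (γ γ' : ℝ → EuclideanSpace ℝ (Fin m)) (g τ : ℝ → ℝ)
    (hg : Continuous g) (hgpos : ∀ t, 0 ≤ g t)
    (hγ : ∀ t ∈ Set.Icc (0:ℝ) 1, HasDerivAt γ (γ' t) t)
    (hspeed : ∀ t ∈ Set.Icc (0:ℝ) 1, ‖γ' t‖ = g t)
    (hτ : ∀ t ∈ Set.Icc (0:ℝ) 1, τ t ∈ Set.Icc (0:ℝ) 1 ∧
      ((∫ s in (0:ℝ)..(τ t), Real.sqrt (1 + g s ^ 2)) /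
        (∫ s in (0:ℝ)..1, Real.sqrt (1 + g s ^ 2))) = t) :
    ∀ t ∈ Set.Icc (0:ℝ) 1, ∀ v : EuclideanSpace ℝ (Fin m),
      HasDerivAt (γ ∘ τ) v t → ‖v‖ ≤ 1 + ∫ s in (0:ℝ)..1, g s :=
  reparametrized_speed_bound_general γ γ' g τ hg hγ hspeed hτ
end
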